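/- arXiv:1811.08710 — 8 statements merged into one kernel-verified Lean document; each statement's English description precedes it below -/
import Mathlib

section
/- Let A be a symmetric matrix on ℝ^d whose positive eigenspace has dimension at most one. Then for all vectors x, y with ⟨y, Ay⟩ ≥ 0, we have ⟨x, Ay⟩² ≥ ⟨x, Ax⟩⟨y, Ay⟩. -/
/-!
Write `Q(x, y) = ⟪x, A y⟫`. Expanding in an orthonormal eigenbasis, `Q(w, w) ≤ 0` for every `w`
orthogonal to the positive eigenspace; as that space is at most a line, this holds on the kernel
of a linear functional `ℓ`. If `Q(y, y) > 0` then `ℓ y ≠ 0`, the vector `w = ℓ y • x - ℓ x • y`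
lies in `ker ℓ`, and
`Q(y, y) Q(w, w) = (ℓ y)² (Q(x, x) Q(y, y) - Q(x, y)²) + (ℓ y Q(x, y) - ℓ x Q(y, y))²`
forces `Q(x, x) Q(y, y) ≤ Q(x, y)²`.
-/

open Matrix

/-- The positive eigenspace of a matrix: the span of all eigenspaces with
strictly positive eigenvalue. -/
noncomputable def posEigenspace {d : ℕ} (A : Matrix (Fin d) (Fin d) ℝ) :
    Submodule ℝ (Fin d → ℝ) :=
  ⨆ μ : ℝ, ⨆ _ : 0 < μ, Module.End.eigenspace A.mulVecLin μ

theorem LinearMap.BilinForm.IsSymm.mul_le_sq_of_nonpos_on_ker {V : Type*} [AddCommGroup V]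
    [Module ℝ V] {B : LinearMap.BilinForm ℝ V} (hB : B.IsSymm) (ℓ : Module.Dual ℝ V)
    (hker : ∀ w, ℓ w = 0 → B w w ≤ 0) (x : V) {y : V} (hy : 0 ≤ B y y) :
    B x x * B y y ≤ B x y ^ 2 := by
  rcases hy.eq_or_lt with hy0 | hy0
  · rw [← hy0, mul_zero]
    exact sq_nonneg _
  have hℓy : 0 < ℓ y ^ 2 := sq_pos_of_ne_zero fun h => hy0.not_ge (hker y h)
  set w := ℓ y • x - ℓ x • y
  have hw : B w w ≤ 0 := hker w (by simp [w, mul_comm])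
  have key : ℓ y ^ 2 * (B x x * B y y - B x y ^ 2)
      = B y y * B w w - (ℓ y * B x y - ℓ x * B y y) ^ 2 := by
    simp only [w, map_sub, map_smul, LinearMap.sub_apply, LinearMap.smul_apply, smul_eq_mul,
      hB.eq y x]
    ring
  have : ℓ y ^ 2 * (B x x * B y y - B x y ^ 2) ≤ 0 := by
    rw [key]
    linarith [mul_nonpos_of_nonneg_of_nonpos hy0.le hw, sq_nonneg (ℓ y * B x y - ℓ x * B y y)]
  linarith [nonpos_of_mul_nonpos_right this hℓy]

namespace Matrix

variable {n : Type*} [Fintype n] [DecidableEq n] {A : Matrix n n ℝ}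

theorem IsHermitian.dotProduct_mulVec_self_eq_sum (hA : A.IsHermitian) (w : n → ℝ) :
    w ⬝ᵥ A *ᵥ w = ∑ i, hA.eigenvalues i * (w ⬝ᵥ hA.eigenvectorBasis i) ^ 2 := by
  have parseval :=
    hA.eigenvectorBasis.sum_inner_mul_inner (WithLp.toLp 2 w) (WithLp.toLp 2 (A *ᵥ w))
  simp only [EuclideanSpace.inner_eq_star_dotProduct, star_trivial] at parseval
  rw [dotProduct_comm, ← parseval]
  refine Finset.sum_congr rfl fun i _ => ?_
  have hAt : Aᵀ = A := (isHermitian_iff_isSymm.mp hA).eq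
  have hAv :
      A *ᵥ w ⬝ᵥ hA.eigenvectorBasis i = hA.eigenvalues i * (hA.eigenvectorBasis i ⬝ᵥ w) := by
    rw [dotProduct_comm, dotProduct_mulVec, ← mulVec_transpose, hAt, mulVec_eigenvectorBasis,
      smul_dotProduct, smul_eq_mul]
  rw [hAv, dotProduct_comm w]
  ring

end Matrix

section posEigenspace

variable {d : ℕ} {A : Matrix (Fin d) (Fin d) ℝ}

theorem mem_posEigenspace_of_mulVec_eq_smul {μ : ℝ} (hμ : 0 < μ) {v : Fin d → ℝ}
    (hv : A *ᵥ v = μ • v) : v ∈ posEigenspace A :=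
  Submodule.mem_iSup_of_mem μ <| Submodule.mem_iSup_of_mem hμ <|
    Module.End.mem_eigenspace_iff.mpr hv

theorem Matrix.IsHermitian.dotProduct_mulVec_self_nonpos_of_orthogonal (hA : A.IsHermitian)
    {w : Fin d → ℝ} (hw : ∀ p ∈ posEigenspace A, w ⬝ᵥ p = 0) : w ⬝ᵥ A *ᵥ w ≤ 0 := by
  rw [hA.dotProduct_mulVec_self_eq_sum]
  refine Finset.sum_nonpos fun i _ => ?_
  rcases lt_or_ge 0 (hA.eigenvalues i) with hpos | hnonpos
  · rw [hw _ (mem_posEigenspace_of_mulVec_eq_smul hpos (hA.mulVec_eigenvectorBasis i))]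
    simp
  · exact mul_nonpos_of_nonpos_of_nonneg hnonpos (sq_nonneg _)

theorem exists_dual_nonpos_on_ker_of_finrank_posEigenspace_le_one (hA : A.IsHermitian)
    (hdim : Module.finrank ℝ (posEigenspace A) ≤ 1) :
    ∃ ℓ : Module.Dual ℝ (Fin d → ℝ), ∀ w, ℓ w = 0 → w ⬝ᵥ A *ᵥ w ≤ 0 := by
  obtain ⟨u, hu⟩ := finrank_le_one_iff.mp hdim
  refine ⟨dotProductEquiv ℝ (Fin d) u, fun w hw =>
    hA.dotProduct_mulVec_self_nonpos_of_orthogonal fun p hp => ?_⟩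
  obtain ⟨c, hc⟩ := hu ⟨p, hp⟩
  have hp_eq : p = c • (u : Fin d → ℝ) := (congrArg Subtype.val hc).symm
  rw [dotProduct_comm, hp_eq, smul_dotProduct, ← dotProductEquiv_apply_apply, hw, smul_zero]

end posEigenspace

theorem stmt0 {d : ℕ} (A : Matrix (Fin d) (Fin d) ℝ) (hA : A.IsSymm)
    (hdim : Module.finrank ℝ (posEigenspace A) ≤ 1) :
    ∀ x y : Fin d → ℝ, 0 ≤ y ⬝ᵥ A.mulVec y →
      (x ⬝ᵥ A.mulVec y) ^ 2 ≥ (x ⬝ᵥ A.mulVec x) * (y ⬝ᵥ A.mulVec y) := by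
  obtain ⟨ℓ, hℓ⟩ :=
    exists_dual_nonpos_on_ker_of_finrank_posEigenspace_le_one (isHermitian_iff_isSymm.mpr hA) hdim
  intro x y hy
  have hB := (isSymm_toBilin'_iff_isSymm.mpr hA).mul_le_sq_of_nonpos_on_ker ℓ
    (by simpa only [toBilin'_apply'] using hℓ) x (by simpa only [toBilin'_apply'] using hy)
  simpa only [toBilin'_apply'] using hB
end

section
/- Let A be a symmetric matrix on ℝ^d such that ⟨x, Ay⟩² ≥ ⟨x, Ax⟩⟨y, Ay⟩ holds for all x, y with ⟨y, Ay⟩ ≥ 0. Then the positive eigenspace of A has dimension at most one. -/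
/-! If `w, v` are orthogonal eigenvectors with positive eigenvalues, then `⟨w, Av⟩ = 0` while
`⟨w, Aw⟩⟨v, Av⟩ > 0`, which the hypothesis forbids unless `w = 0` or `v = 0`. Fix a positive
eigenvector `w ≠ 0`. An eigenvector `v` for a different positive eigenvalue is orthogonal to `w`
by symmetry, hence zero. For `v` in the same eigenspace as `w`, the component `v - c w`
orthogonal to `w` is again in that eigenspace, hence zero. So the positive eigenspace lies in
the line through `w`. -/

open Matrix

section

variable {n : Type*} [Fintype n] {A : Matrix n n ℝ}

lemma mulVec_eq_smul_of_mem_eigenspace {μ : ℝ} {v : n → ℝ}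
    (hv : v ∈ Module.End.eigenspace A.mulVecLin μ) : A *ᵥ v = μ • v :=
  Module.End.mem_eigenspace_iff.mp hv

lemma dotProduct_mulVec_of_mem_eigenspace {μ : ℝ} {v : n → ℝ}
    (hv : v ∈ Module.End.eigenspace A.mulVecLin μ) (x : n → ℝ) :
    x ⬝ᵥ A *ᵥ v = μ * (x ⬝ᵥ v) := by
  rw [mulVec_eq_smul_of_mem_eigenspace hv, dotProduct_smul, smul_eq_mul]

lemma dotProduct_eq_zero_of_mem_eigenspace_of_ne (hA : A.IsSymm) {μ ν : ℝ} (hμν : μ ≠ ν)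
    {w v : n → ℝ} (hw : w ∈ Module.End.eigenspace A.mulVecLin μ)
    (hv : v ∈ Module.End.eigenspace A.mulVecLin ν) : w ⬝ᵥ v = 0 := by
  have hsymm : w ⬝ᵥ A *ᵥ v = v ⬝ᵥ A *ᵥ w := by
    rw [dotProduct_mulVec, ← mulVec_transpose, hA, dotProduct_comm]
  rw [dotProduct_mulVec_of_mem_eigenspace hv, dotProduct_mulVec_of_mem_eigenspace hw,
    dotProduct_comm v] at hsymm
  exact (mul_eq_mul_right_iff.mp hsymm).resolve_left hμν.symm

variable (h : ∀ x y : n → ℝ, 0 ≤ y ⬝ᵥ A.mulVec y →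
      (x ⬝ᵥ A.mulVec y) ^ 2 ≥ (x ⬝ᵥ A.mulVec x) * (y ⬝ᵥ A.mulVec y))
include h

lemma eq_zero_of_orthogonal_posEigenvectors {μ ν : ℝ} (hμ : 0 < μ) (hν : 0 < ν)
    {w v : n → ℝ} (hw : w ∈ Module.End.eigenspace A.mulVecLin μ) (hw0 : w ≠ 0)
    (hv : v ∈ Module.End.eigenspace A.mulVecLin ν) (hwv : w ⬝ᵥ v = 0) : v = 0 := by
  by_contra hv0
  have hww : 0 < w ⬝ᵥ w := by simpa using dotProduct_self_star_pos_iff.mpr hw0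
  have hvv : 0 < v ⬝ᵥ v := by simpa using dotProduct_self_star_pos_iff.mpr hv0
  have hineq := h w v (by rw [dotProduct_mulVec_of_mem_eigenspace hv]; positivity)
  rw [dotProduct_mulVec_of_mem_eigenspace hv, dotProduct_mulVec_of_mem_eigenspace hw,
    dotProduct_mulVec_of_mem_eigenspace hv, hwv] at hineq
  nlinarith [mul_pos (mul_pos hμ hww) (mul_pos hν hvv)]

lemma mem_span_singleton_of_posEigenvectors (hA : A.IsSymm) {μ ν : ℝ} (hμ : 0 < μ)
    (hν : 0 < ν) {w v : n → ℝ} (hw : w ∈ Module.End.eigenspace A.mulVecLin μ)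
    (hw0 : w ≠ 0) (hv : v ∈ Module.End.eigenspace A.mulVecLin ν) :
    v ∈ Submodule.span ℝ {w} := by
  rcases eq_or_ne μ ν with rfl | hμν
  · set c := (w ⬝ᵥ v) / (w ⬝ᵥ w)
    have hww : w ⬝ᵥ w ≠ 0 := by simpa using (dotProduct_self_star_pos_iff.mpr hw0).ne'
    have hproj : w ⬝ᵥ (v - c • w) = 0 := by
      rw [dotProduct_sub, dotProduct_smul, smul_eq_mul, div_mul_cancel₀ _ hww, sub_self]
    have hzero := eq_zero_of_orthogonal_posEigenvectors h hμ hμ hw hw0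
      (sub_mem hv (Submodule.smul_mem _ c hw)) hproj
    rw [sub_eq_zero.mp hzero]
    exact Submodule.smul_mem _ c (Submodule.mem_span_singleton_self w)
  · rw [eq_zero_of_orthogonal_posEigenvectors h hμ hν hw hw0 hv
      (dotProduct_eq_zero_of_mem_eigenspace_of_ne hA hμν hw hv)]
    exact Submodule.zero_mem _

end

lemma posEigenspace_le_span_singleton {d : ℕ} {A : Matrix (Fin d) (Fin d) ℝ}
    (h : ∀ x y : Fin d → ℝ, 0 ≤ y ⬝ᵥ A.mulVec y →
      (x ⬝ᵥ A.mulVec y) ^ 2 ≥ (x ⬝ᵥ A.mulVec x) * (y ⬝ᵥ A.mulVec y))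
    (hA : A.IsSymm) {μ : ℝ} (hμ : 0 < μ) {w : Fin d → ℝ}
    (hw : w ∈ Module.End.eigenspace A.mulVecLin μ) (hw0 : w ≠ 0) :
    posEigenspace A ≤ Submodule.span ℝ {w} :=
  iSup₂_le fun _ hν _ hv => mem_span_singleton_of_posEigenvectors h hA hμ hν hw hw0 hv

theorem stmt1 {d : ℕ} (A : Matrix (Fin d) (Fin d) ℝ) (hA : A.IsSymm)
    (h : ∀ x y : Fin d → ℝ, 0 ≤ y ⬝ᵥ A.mulVec y →
      (x ⬝ᵥ A.mulVec y) ^ 2 ≥ (x ⬝ᵥ A.mulVec x) * (y ⬝ᵥ A.mulVec y)) :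
    Module.finrank ℝ (posEigenspace A) ≤ 1 := by
  by_cases hS : posEigenspace A = ⊥
  · rw [hS, finrank_bot]; exact zero_le_one
  obtain ⟨μ, hμ, w, hw, hw0⟩ :
      ∃ μ : ℝ, 0 < μ ∧ ∃ w ∈ Module.End.eigenspace A.mulVecLin μ, w ≠ 0 := by
    rw [posEigenspace] at hS
    simp only [iSup_eq_bot, not_forall] at hS
    obtain ⟨μ, hμ, hne⟩ := hS
    exact ⟨μ, hμ, (Submodule.ne_bot_iff _).mp hne⟩
  calc Module.finrank ℝ (posEigenspace A)
      ≤ Module.finrank ℝ (Submodule.span ℝ {w}) :=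
        Submodule.finrank_mono (posEigenspace_le_span_singleton h hA hμ hw hw0)
    _ = 1 := finrank_span_singleton hw0
end

section
/- Let A be a symmetric matrix on ℝ^d and suppose there exists a vector w such that ⟨x, Ax⟩ ≤ 0 for all x with ⟨x, Aw⟩ = 0. Then ⟨x, Ay⟩² ≥ ⟨x, Ax⟩⟨y, Ay⟩ for all x, y with ⟨y, Ay⟩ ≥ 0. -/
/-!
Write `B x y = ⟨x, A y⟩`. If the reverse Cauchy–Schwarz inequality failed for `x` and `y`, then
`B y y > 0` and `z = B y y • x - B x y • y` would be `B`-orthogonal to `y` with `B z z > 0`, so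
`B` would be positive definite on the plane spanned by `y` and `z`. But that plane meets the
hyperplane `B(·, w) = 0`, on which `B` is negative semidefinite, in a nonzero vector.
-/

open Matrix

namespace LinearMap.BilinForm

variable {R M : Type*} [CommRing R] [AddCommGroup M] [Module R M] {B : LinearMap.BilinForm R M}

theorem IsSymm.apply_smul_add_smul_self_of_apply_eq_zero (hB : B.IsSymm) {y z : M}
    (hyz : B y z = 0) (a b : R) :
    B (a • y + b • z) (a • y + b • z) = a ^ 2 * B y y + b ^ 2 * B z z := by
  have hzy : B z y = 0 := by rw [hB.eq, hyz]
  simp only [map_add, map_smul, LinearMap.add_apply, LinearMap.smul_apply, smul_eq_mul, hyz, hzy]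
  ring

variable [LinearOrder R] [IsStrictOrderedRing R]

theorem IsSymm.not_pos_on_orthogonal_pair_of_nonpos_on_ker (hB : B.IsSymm) {f : M →ₗ[R] R}
    (hf : ∀ x ∈ LinearMap.ker f, B x x ≤ 0) {y z : M} (hyz : B y z = 0)
    (hy : 0 < B y y) (hz : 0 < B z z) : False := by
  have hv : f z • y + (-f y) • z ∈ LinearMap.ker f := by
    simp only [LinearMap.mem_ker, map_add, map_smul, smul_eq_mul]
    ring
  have hvv := hf _ hv
  rw [hB.apply_smul_add_smul_self_of_apply_eq_zero hyz, neg_sq] at hvv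
  have hfy_sq : f y ^ 2 * B z z ≤ 0 := by nlinarith [mul_nonneg (sq_nonneg (f z)) hy.le]
  have hfy : f y = 0 :=
    (pow_eq_zero_iff two_ne_zero).mp ((nonpos_of_mul_nonpos_left hfy_sq hz).antisymm (sq_nonneg _))
  exact (hf y hfy).not_gt hy

theorem IsSymm.mul_le_sq_of_nonpos_on_ker_s2 (hB : B.IsSymm) {f : M →ₗ[R] R}
    (hf : ∀ x ∈ LinearMap.ker f, B x x ≤ 0) (x : M) {y : M} (hy : 0 ≤ B y y) :
    B x x * B y y ≤ B x y ^ 2 := by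
  by_contra! hlt
  have hy_pos : 0 < B y y := hy.lt_of_ne fun h ↦ by
    rw [← h, mul_zero] at hlt
    exact hlt.not_ge (sq_nonneg _)
  set z := B y y • x + (-B x y) • y
  have hyz : B y z = 0 := by
    simp only [z, map_add, map_smul, smul_eq_mul, hB.eq y x]
    ring
  have hzz : B z z = B y y * (B x x * B y y - B x y ^ 2) := by
    simp only [z, map_add, map_smul, LinearMap.add_apply, LinearMap.smul_apply, smul_eq_mul,
      hB.eq y x]
    ring
  refine hB.not_pos_on_orthogonal_pair_of_nonpos_on_ker hf hyz hy_pos ?_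
  rw [hzz]
  exact mul_pos hy_pos (by linarith)

end LinearMap.BilinForm

theorem stmt2 {d : ℕ} (A : Matrix (Fin d) (Fin d) ℝ) (hA : A.IsSymm)
    (w : Fin d → ℝ) (hw : ∀ x : Fin d → ℝ, x ⬝ᵥ A.mulVec w = 0 → x ⬝ᵥ A.mulVec x ≤ 0) :
    ∀ x y : Fin d → ℝ, 0 ≤ y ⬝ᵥ A.mulVec y →
      (x ⬝ᵥ A.mulVec y) ^ 2 ≥ (x ⬝ᵥ A.mulVec x) * (y ⬝ᵥ A.mulVec y) := by
  intro x y hy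
  have hB : A.toBilin'.IsSymm := Matrix.isSymm_toBilin'_iff_isSymm.mpr hA
  simp only [← Matrix.toBilin'_apply'] at hw hy ⊢
  exact hB.mul_le_sq_of_nonpos_on_ker_s2 (f := A.toBilin'.flip w) hw x hy
end

section
/- For any 2×2 real symmetric matrices A and B with B positive definite, the mixed discriminant satisfies D(A,B)² ≥ D(A,A)·D(B,B), where D(A,B) = (det(A+B) − det(A) − det(B))/2. -/
/-!
Along the pencil `t ↦ A + t • B` the determinant is the quadratic
`det B * t² + 2 D(A,B) * t + det A`, whose leading coefficient `det B` is positive. Choosing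
`t = -A₀₀ / B₀₀` kills the `(0,0)` entry of the symmetric matrix `A + t • B`, so its determinant
is `-(A + t • B)₀₁² ≤ 0`. A quadratic with positive leading coefficient that takes a
nonpositive value has nonnegative discriminant `4 D(A,B)² - 4 det A det B`.
-/

open Matrix

theorem discrim_nonneg_of_quadratic_nonpos {R : Type*} [CommRing R] [LinearOrder R]
    [IsStrictOrderedRing R] {a b c x : R} (ha : 0 ≤ a) (h : a * (x * x) + b * x + c ≤ 0) :
    0 ≤ discrim a b c := by
  have hsq : discrim a b c = (2 * a * x + b) ^ 2 - 4 * a * (a * (x * x) + b * x + c) := by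
    rw [discrim]; ring
  rw [hsq]
  nlinarith [sq_nonneg (2 * a * x + b), mul_nonpos_of_nonneg_of_nonpos ha h]

namespace Matrix

theorem det_add_smul_fin_two {R : Type*} [CommRing R] (A B : Matrix (Fin 2) (Fin 2) R) (t : R) :
    det (A + t • B) = det B * (t * t) + (det (A + B) - det A - det B) * t + det A := by
  simp only [det_fin_two, add_apply, smul_apply, smul_eq_mul]
  ring

theorem IsSymm.det_fin_two_nonpos {R : Type*} [CommRing R] [LinearOrder R]
    [IsStrictOrderedRing R] {M : Matrix (Fin 2) (Fin 2) R} (hM : M.IsSymm) (h₀₀ : M 0 0 = 0) :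
    det M ≤ 0 := by
  rw [det_fin_two, h₀₀, hM.apply 0 1]
  nlinarith [sq_nonneg (M 0 1)]

end Matrix

theorem stmt5 (A B : Matrix (Fin 2) (Fin 2) ℝ) (hA : A.IsSymm) (hB : B.PosDef) :
    ((det (A + B) - det A - det B) / 2) ^ 2 ≥ det A * det B := by
  have hB₀₀ : B 0 0 ≠ 0 := (hB.diag_pos (i := 0)).ne'
  set t := -(A 0 0 / B 0 0) with ht
  have hpencil : det (A + t • B) ≤ 0 :=
    (hA.add ((isHermitian_iff_isSymm.mp hB.isHermitian).smul t)).det_fin_two_nonpos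
      (show A 0 0 + t * B 0 0 = 0 by rw [ht, neg_mul, div_mul_cancel₀ _ hB₀₀, add_neg_cancel])
  rw [det_add_smul_fin_two] at hpencil
  have hdiscrim := discrim_nonneg_of_quadratic_nonpos hB.det_pos.le hpencil
  rw [discrim] at hdiscrim
  linarith
end

section
/- If M₁, …, M_m are m×m real positive semidefinite matrices, then their mixed discriminant D(M₁,…,M_m) is nonnegative. -/
/-! Every positive semidefinite matrix is a sum of rank-one matrices `v vᵀ`. The sum over
permutations defining the mixed discriminant is multilinear in the `m` matrices, and on rank-one
arguments `v₁ v₁ᵀ, …, vₘ vₘᵀ` it equals `det [v₁ ⋯ vₘ] ^ 2`; hence it is a sum of squares. -/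

open Matrix

/-- The mixed discriminant of an `m`-tuple of `m × m` real matrices: the symmetric
multilinear polarization of the determinant, so that
`det (λ₁ • M₁ + ⋯ + λₘ • Mₘ) = ∑ D(M_{i₁}, …, M_{iₘ}) λ_{i₁} ⋯ λ_{iₘ}`. -/
noncomputable def mixedDisc {m : ℕ} (M : Fin m → Matrix (Fin m) (Fin m) ℝ) : ℝ :=
  (Nat.factorial m : ℝ)⁻¹ *
    ∑ σ : Equiv.Perm (Fin m), (Matrix.of fun i j => M (σ j) i j).det

namespace Matrix

open Equiv Finset

variable {n R : Type*} [Fintype n] [DecidableEq n] [CommRing R]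

/-- The determinant of the matrix whose `j`-th column is the `j`-th column of `M j`. -/
def detOfColumns : MultilinearMap R (fun _ : n => Matrix n n R) R :=
  (detRowAlternating : (n → R) [⋀^n]→ₗ[R] R).toMultilinearMap.compLinearMap
    fun j => (LinearMap.proj j).comp (transposeLinearEquiv n n R R).toLinearMap

def polarizedDet : MultilinearMap R (fun _ : n => Matrix n n R) R :=
  ∑ σ : Perm n, detOfColumns.domDomCongr σ

theorem polarizedDet_apply (M : n → Matrix n n R) :
    polarizedDet M = ∑ σ : Perm n, (of fun i j => M (σ j) i j).det := by
  simp only [polarizedDet, _root_.sum_apply, MultilinearMap.domDomCongr_apply]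
  refine sum_congr rfl fun σ _ => ?_
  rw [← det_transpose]
  rfl

theorem polarizedDet_vecMulVec_self (w : n → n → R) :
    polarizedDet (fun k => vecMulVec (w k) (w k)) = (of w).det ^ 2 := by
  have hterm : ∀ σ : Perm n, (of fun i j => vecMulVec (w (σ j)) (w (σ j)) i j).det
      = Perm.sign σ * (∏ j, of w (σ j) j) * (of w).det := by
    intro σ
    have hcol : (of fun i j => vecMulVec (w (σ j)) (w (σ j)) i j)
        = of fun i j => w (σ j) j * ((of w).submatrix σ id)ᵀ i j := by
      ext i j
      simp [vecMulVec_apply, mul_comm]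
    rw [hcol, det_mul_row, det_transpose, det_permute]
    simp only [of_apply]
    ring
  rw [polarizedDet_apply, Fintype.sum_congr _ _ hterm, ← sum_mul, ← det_apply', sq]

theorem polarizedDet_nonneg {M : n → Matrix n n ℝ} (hM : ∀ k, (M k).PosSemidef) :
    0 ≤ polarizedDet M := by
  choose r v hv using fun k => posSemidef_iff_eq_sum_vecMulVec.mp (hM k)
  have hM_eq : M = fun k => ∑ l, vecMulVec (v k l) (v k l) := funext fun k => by
    simpa only [star_trivial] using hv k
  rw [hM_eq, MultilinearMap.map_sum]
  refine sum_nonneg fun f _ => ?_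
  rw [polarizedDet_vecMulVec_self fun k => v k (f k)]
  exact sq_nonneg _

end Matrix

theorem mixedDisc_eq_inv_factorial_mul_polarizedDet {m : ℕ}
    (M : Fin m → Matrix (Fin m) (Fin m) ℝ) :
    mixedDisc M = (Nat.factorial m : ℝ)⁻¹ * polarizedDet M := by
  rw [polarizedDet_apply, mixedDisc]

theorem stmt8 {m : ℕ} (M : Fin m → Matrix (Fin m) (Fin m) ℝ)
    (hM : ∀ i, (M i).PosSemidef) : 0 ≤ mixedDisc M := by
  rw [mixedDisc_eq_inv_factorial_mul_polarizedDet]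
  exact mul_nonneg (by positivity) (polarizedDet_nonneg hM)
end

section
/- If M₁ is positive semidefinite and nonzero, and M₂, …, M_m are positive definite m×m real matrices, then the mixed discriminant D(M₁, M₂, …, M_m) is strictly positive. -/
/-!
Write each `Mᵢ` as a Gram matrix `Bᵢᵀ Bᵢ`. Expanding every determinant in the definition of the
mixed discriminant multilinearly in its columns gives a Cauchy–Binet type identity
`m! · D(M) = ∑_κ det(row κ₁ of B₁, …, row κₘ of Bₘ)²`, a sum of squares. One of them is nonzero:
a nonzero row of `B₁` completes to a basis, and since `B₂, …, Bₘ` are invertible their rows span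
everything, so expanding the determinant of that basis multilinearly in the rows exhibits a
selection of rows with nonzero determinant.
-/

open Matrix

namespace MultilinearMap

variable {R M N ι κ : Type*} [CommSemiring R] [AddCommMonoid M] [Module R M]
  [AddCommMonoid N] [Module R N] [Fintype ι] [DecidableEq ι] [Fintype κ]

theorem exists_apply_ne_zero_of_apply_sum_smul_ne_zero (f : MultilinearMap R (fun _ : ι => M) N)
    (v : ι → κ → M) (c : ι → κ → R) (h : f (fun i => ∑ k, c i k • v i k) ≠ 0) :
    ∃ k : ι → κ, f (fun i => v i (k i)) ≠ 0 := by
  contrapose! h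
  simp [map_sum, map_smul_univ, h]

end MultilinearMap

namespace Matrix

open Equiv

variable {n : Type*} [Fintype n]

theorem PosSemidef.exists_eq_transpose_mul_self {M : Matrix n n ℝ} (hM : M.PosSemidef) :
    ∃ B : Matrix n n ℝ, M = Bᵀ * B := by
  classical
  open scoped MatrixOrder in
  obtain ⟨B, hB⟩ := CStarAlgebra.nonneg_iff_eq_star_mul_self.mp hM.nonneg
  exact ⟨B, by rw [hB, star_eq_conjTranspose, conjTranspose_eq_transpose_of_trivial]⟩

variable [DecidableEq n]

section CauchyBinet

variable {ι R : Type*} [Fintype ι] [CommRing R]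

theorem det_of_mul_apply_perm (A : n → Matrix n ι R) (B : n → Matrix ι n R) (σ : Perm n) :
    (of fun i j => (A (σ j) * B (σ j)) i j).det
      = ∑ κ : n → ι,
          (Perm.sign σ * ∏ j, B (σ j) (κ (σ j)) j) * (of fun i j => A j i (κ j)).det := by
  have hcols : (of fun i j => (A (σ j) * B (σ j)) i j)ᵀ
      = of fun j => ∑ l, B (σ j) l j • fun i => A (σ j) i l := by
    ext j i
    simp [mul_apply, mul_comm, Finset.sum_apply]
  rw [← det_transpose, hcols]
  change detRowAlternating.toMultilinearMap (fun j => ∑ l, B (σ j) l j • fun i => A (σ j) i l) = _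
  rw [MultilinearMap.map_sum]
  refine Fintype.sum_equiv (Equiv.arrowCongr σ (Equiv.refl ι)) _ _ fun r => ?_
  rw [MultilinearMap.map_smul_univ]
  have hperm :
      (of fun i j => A j i (r (σ⁻¹ j)))ᵀ.submatrix σ id = of fun j i => A (σ j) i (r j) := by
    ext j i
    simp
  have hdet : detRowAlternating.toMultilinearMap (fun j i => A (σ j) i (r j))
      = Perm.sign σ * (of fun i j => A j i (r (σ.symm j))).det := by
    rw [← det_transpose (of _), ← det_permute, ← Perm.inv_def, hperm]
    rfl
  rw [hdet]
  simp only [arrowCongr_apply, Equiv.coe_refl, Function.comp_apply, id_eq, symm_apply_apply,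
    smul_eq_mul]
  ring

theorem sum_perm_det_of_mul_apply (A : n → Matrix n ι R) (B : n → Matrix ι n R) :
    ∑ σ : Perm n, (of fun i j => (A (σ j) * B (σ j)) i j).det
      = ∑ κ : n → ι, (of fun i j => A j i (κ j)).det * (of fun i => B i (κ i)).det := by
  simp_rw [det_of_mul_apply_perm]
  rw [Finset.sum_comm]
  refine Finset.sum_congr rfl fun κ _ => ?_
  rw [← Finset.sum_mul, mul_comm, det_apply' (of fun i => B i (κ i))]
  rfl

theorem sum_perm_det_of_transpose_mul_self_apply (B : n → Matrix ι n R) :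
    ∑ σ : Perm n, (of fun i j => ((B (σ j))ᵀ * B (σ j)) i j).det
      = ∑ κ : n → ι, (of fun i => B i (κ i)).det ^ 2 := by
  refine (sum_perm_det_of_mul_apply (fun k => (B k)ᵀ) B).trans
    (Finset.sum_congr rfl fun κ _ => ?_)
  rw [sq, ← det_transpose (of fun i => B i (κ i))]
  rfl

end CauchyBinet

theorem det_updateRow_one {R : Type*} [CommRing R] (j : n) (v : n → R) :
    ((1 : Matrix n n R).updateRow j v).det = v j := by
  simpa [← vecMul_eq_sum] using det_updateRow_sum (1 : Matrix n n R) j v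

theorem exists_det_of_rows_ne_zero {K : Type*} [Field K] (B : n → Matrix n n K) (i₀ : n)
    (h₀ : B i₀ ≠ 0) (hB : ∀ i ≠ i₀, IsUnit (B i)) :
    ∃ κ : n → n, (of fun i => B i (κ i)).det ≠ 0 := by
  obtain ⟨r, j, hrj⟩ : ∃ r j, B i₀ r j ≠ 0 := by
    by_contra! h
    exact h₀ (ext h)
  -- row `i₀` of `W` is `B i₀ r`, and `det W = ± B i₀ r j`
  set W := ((1 : Matrix n n K).updateRow j (B i₀ r)).submatrix (Equiv.swap i₀ j) id
  have hW : W.det ≠ 0 := by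
    rw [det_permute, det_updateRow_one]
    rcases Int.units_eq_one_or (Perm.sign (Equiv.swap i₀ j)) with h | h <;> simp [h, hrj]
  have hrows : ∀ i, ∃ c : n → K, ∑ k, c k • B i k = W i := by
    intro i
    rcases eq_or_ne i i₀ with rfl | hi
    · exact ⟨Pi.single r 1, by rw [← vecMul_eq_sum, single_one_vecMul]; ext; simp [W]⟩
    · obtain ⟨c, hc⟩ := vecMul_surjective_iff_isUnit.mpr (hB i hi) (W i)
      exact ⟨c, by rw [← vecMul_eq_sum]; exact hc⟩
  choose c hc using hrows
  exact detRowAlternating.toMultilinearMap.exists_apply_ne_zero_of_apply_sum_smul_ne_zero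
    (fun i => B i) c (by rw [funext hc]; exact hW)

end Matrix

theorem mixedDisc_transpose_mul_self {m : ℕ} (B : Fin m → Matrix (Fin m) (Fin m) ℝ) :
    mixedDisc (fun i => (B i)ᵀ * B i)
      = (Nat.factorial m : ℝ)⁻¹ * ∑ κ : Fin m → Fin m, (of fun i => B i (κ i)).det ^ 2 :=
  congrArg _ (sum_perm_det_of_transpose_mul_self_apply B)

theorem stmt9 {m : ℕ} (M : Fin (m + 1) → Matrix (Fin (m + 1)) (Fin (m + 1)) ℝ)
    (h0 : (M 0).PosSemidef) (h0ne : M 0 ≠ 0) (hM : ∀ i, i ≠ 0 → (M i).PosDef) :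
    0 < mixedDisc M := by
  have hpsd : ∀ i, (M i).PosSemidef := fun i => by
    rcases eq_or_ne i 0 with rfl | hi
    · exact h0
    · exact (hM i hi).posSemidef
  choose B hB using fun i => (hpsd i).exists_eq_transpose_mul_self
  obtain rfl : M = fun i => (B i)ᵀ * B i := funext hB
  have hB0 : B 0 ≠ 0 := by
    intro hB0
    exact h0ne (by simp [hB0])
  have hBunit : ∀ i, i ≠ 0 → IsUnit (B i) := by
    intro i hi
    have hdet := (hM i hi).det_pos
    rw [det_mul, det_transpose] at hdet
    exact (isUnit_iff_isUnit_det _).mpr (left_ne_zero_of_mul hdet.ne').isUnit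
  obtain ⟨κ, hκ⟩ := exists_det_of_rows_ne_zero B 0 hB0 hBunit
  rw [mixedDisc_transpose_mul_self]
  exact mul_pos (by positivity) <|
    Finset.sum_pos' (fun _ _ => sq_nonneg _) ⟨κ, Finset.mem_univ _, sq_pos_of_ne_zero hκ⟩
end

section
/- For m×m symmetric matrices M₂,…,M_m and standard basis vector e_i, the mixed discriminant satisfies D(e_i e_i*, M₂, …, M_m) = (1/m) · D(M₂^{⟨i⟩}, …, M_m^{⟨i⟩}), where M^{⟨i⟩} is the (m−1)×(m−1) matrix obtained from M by deleting its i-th row and column. -/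
open Matrix

/-!
Expand `det` along column `i` in each term of the permutation sum. The matrix whose `b`-th
column is taken from `M_{σ b}`, with `M_0 = e_i e_iᵀ`, has a zero column unless `σ i = 0`; when
`σ i = 0` its `i`-th column is `e_i`, so its determinant is that of the minor obtained by deleting
row and column `i`, which is exactly a term of the `(m-1)`-dimensional sum. Permutations with
`σ i = 0` correspond to permutations of `Fin (m-1)`, and the normalisations differ by
`m! / (m-1)! = m`.
-/

open Equiv

namespace Equiv.Perm

variable {n : ℕ}

/-- `σ` is sent to the position of `σ i` relative to `j` (`none` iff `σ i = j`) and to the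
permutation of `Fin n` it induces once `i` and `j` are removed (via `succAbove`). -/
def decomposeFinAt (i j : Fin (n + 1)) : Perm (Fin (n + 1)) ≃ Option (Fin n) × Perm (Fin n) :=
  ((finSuccEquiv' i).equivCongr (finSuccEquiv' j)).trans decomposeOption

theorem decomposeFinAt_symm_apply_self (i j : Fin (n + 1)) (x : Option (Fin n))
    (τ : Perm (Fin n)) : (decomposeFinAt i j).symm (x, τ) i = (finSuccEquiv' j).symm x := by
  simp [decomposeFinAt, finSuccEquiv'_at]

theorem decomposeFinAt_symm_none_apply_succAbove (i j : Fin (n + 1)) (τ : Perm (Fin n))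
    (c : Fin n) : (decomposeFinAt i j).symm (none, τ) (i.succAbove c) = j.succAbove (τ c) := by
  simp [decomposeFinAt, finSuccEquiv'_succAbove]

end Equiv.Perm

namespace Matrix

variable {R : Type*}

theorem det_eq_det_submatrix_succAbove_of_col_eq_single [CommRing R] {n : ℕ}
    (A : Matrix (Fin (n + 1)) (Fin (n + 1)) R) (i : Fin (n + 1))
    (h : (fun a => A a i) = Pi.single i 1) :
    A.det = (A.submatrix i.succAbove i.succAbove).det := by
  rw [det_succ_column A i, Fintype.sum_eq_single i fun a ha => by simp [congrFun h a, ha]]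
  simp [congrFun h i, ← two_mul, pow_mul]

variable {n ι : Type*}

def mixedColumnMatrix (N : ι → Matrix n n R) (σ : n → ι) : Matrix n n R :=
  of fun a b => N (σ b) a b

theorem mixedColumnMatrix_submatrix {m : Type*} (N : ι → Matrix n n R) (σ : n → ι)
    (e : m → n) :
    (mixedColumnMatrix N σ).submatrix e e =
      mixedColumnMatrix (fun j => (N j).submatrix e e) (σ ∘ e) :=
  rfl

theorem det_mixedColumnMatrix_eq_zero [CommRing R] [Fintype n] [DecidableEq n]
    (N : ι → Matrix n n R) (σ : n → ι) {b i : n} (hb : N (σ b) = single i i 1)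
    (hbi : b ≠ i) :
    (mixedColumnMatrix N σ).det = 0 :=
  det_eq_zero_of_column_eq_zero b fun a => by simp [mixedColumnMatrix, hb, hbi.symm]

end Matrix

theorem mixedDisc_eq {m : ℕ} (M : Fin m → Matrix (Fin m) (Fin m) ℝ) :
    mixedDisc M = (m.factorial : ℝ)⁻¹ * ∑ σ : Perm (Fin m), (mixedColumnMatrix M σ).det :=
  rfl

section ConsSingle

open Equiv.Perm

variable {R : Type*} [CommRing R] {k : ℕ} (M : Fin k → Matrix (Fin (k + 1)) (Fin (k + 1)) R)
  (i : Fin (k + 1))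

theorem det_mixedColumnMatrix_cons_single_of_ne_zero {σ : Perm (Fin (k + 1))} (hσ : σ i ≠ 0) :
    (mixedColumnMatrix (Fin.cons (single i i 1) M) σ).det = 0 :=
  det_mixedColumnMatrix_eq_zero _ σ (b := σ.symm 0) (i := i) (by simp)
    fun h => hσ (by simp [← h])

theorem det_mixedColumnMatrix_cons_single_decomposeFinAt (τ : Perm (Fin k)) :
    (mixedColumnMatrix (Fin.cons (single i i 1) M)
        ((decomposeFinAt i 0).symm (none, τ))).det =
      (mixedColumnMatrix (fun j => (M j).submatrix i.succAbove i.succAbove) τ).det := by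
  rw [det_eq_det_submatrix_succAbove_of_col_eq_single _ i, mixedColumnMatrix_submatrix]
  · congr 1
    ext a b
    simp [mixedColumnMatrix, decomposeFinAt_symm_none_apply_succAbove]
  · ext a
    simp [mixedColumnMatrix, decomposeFinAt_symm_apply_self, single_apply, Pi.single_apply,
      eq_comm]

theorem sum_det_mixedColumnMatrix_cons_single :
    ∑ σ : Perm (Fin (k + 1)), (mixedColumnMatrix (Fin.cons (single i i 1) M) σ).det =
      ∑ τ : Perm (Fin k),
        (mixedColumnMatrix (fun j => (M j).submatrix i.succAbove i.succAbove) τ).det := by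
  rw [← (decomposeFinAt i 0).symm.sum_comp, Fintype.sum_prod_type, Fintype.sum_option,
    Finset.sum_eq_zero fun c _ => Finset.sum_eq_zero fun τ _ => ?_, add_zero]
  · exact Finset.sum_congr rfl fun τ _ => det_mixedColumnMatrix_cons_single_decomposeFinAt M i τ
  · refine det_mixedColumnMatrix_cons_single_of_ne_zero M i ?_
    simp [decomposeFinAt_symm_apply_self, Fin.succ_ne_zero]

end ConsSingle

theorem stmt11_general {k : ℕ} (M : Fin k → Matrix (Fin (k + 1)) (Fin (k + 1)) ℝ)
    (i : Fin (k + 1)) :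
    mixedDisc (Fin.cons (single i i (1 : ℝ)) M) =
      (1 / (k + 1 : ℝ)) *
        mixedDisc (fun j => (M j).submatrix i.succAbove i.succAbove) := by
  rw [mixedDisc_eq, mixedDisc_eq, sum_det_mixedColumnMatrix_cons_single M i, Nat.factorial_succ]
  push_cast
  field_simp

theorem stmt11 {k : ℕ} (M : Fin k → Matrix (Fin (k + 1)) (Fin (k + 1)) ℝ)
    (hM : ∀ j, (M j).IsSymm) (i : Fin (k + 1)) :
    mixedDisc (Fin.cons (single i i (1 : ℝ)) M) =
      (1 / (k + 1 : ℝ)) *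
        mixedDisc (fun j => (M j).submatrix i.succAbove i.succAbove) :=
  stmt11_general M i
end

section
/- Let A be a self-adjoint operator on a finite-dimensional real inner product space with a simple largest eigenvalue equal to 1 and eigenvector w, and suppose ⟨Ax, Ax⟩ ≥ ⟨x, Ax⟩ for all x. Then for all x, y with ⟨y, Ay⟩ ≥ 0, we have ⟨x, Ay⟩² ≥ ⟨x, Ax⟩⟨y, Ay⟩. -/
/-!
On the orthogonal complement of `w` the form `x ↦ ⟪x, A x⟫` is negative semidefinite: an
eigenvector `v ⊥ w` has eigenvalue `μ ≠ 1` (the `1`-eigenspace is the line through `w`), hence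
`μ < 1`, while `⟪A v, A v⟫ ≥ ⟪v, A v⟫` reads `μ² ≥ μ`; so `μ ≤ 0`. A symmetric form that is
nonpositive on a hyperplane satisfies the reverse Cauchy–Schwarz inequality at every `y` with
`⟪y, A y⟫ ≥ 0`, as in Lorentzian geometry.
-/

open scoped RealInnerProductSpace
open Module.End

theorem LinearMap.BilinForm.IsSymm.mul_self_le_sq_of_nonpos_on_ker
    {K M : Type*} [Field K] [LinearOrder K] [IsStrictOrderedRing K] [AddCommGroup M] [Module K M]
    {B : LinearMap.BilinForm K M} (hB : B.IsSymm) (f : M →ₗ[K] K)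
    (hneg : ∀ u, f u = 0 → B u u ≤ 0) (x y : M) (hy : 0 ≤ B y y) :
    B x x * B y y ≤ B x y ^ 2 := by
  by_contra! hlt
  have hy : 0 < B y y := hy.lt_of_ne fun h ↦ by
    rw [← h, mul_zero] at hlt
    exact (sq_nonneg _).not_gt hlt
  have hx : 0 < B x x := by nlinarith [sq_nonneg (B x y)]
  have hfx : f x ≠ 0 := fun h ↦ (hneg x h).not_gt hx
  -- `u = f y • x - f x • y ∈ ker f`, yet `B y y * B u u` is visibly positive
  have hu := hneg (f y • x - f x • y) (by simp [mul_comm])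
  simp only [map_sub, map_smul, LinearMap.sub_apply, LinearMap.smul_apply, smul_eq_mul,
    hB.eq y x] at hu
  have key : B y y * (f y * (f y * B x x - f x * B x y) - f x * (f y * B x y - f x * B y y)) =
      (f x * B y y - f y * B x y) ^ 2 + f y ^ 2 * (B x x * B y y - B x y ^ 2) := by ring
  have hpos : 0 < (f x * B y y - f y * B x y) ^ 2 + f y ^ 2 * (B x x * B y y - B x y ^ 2) := by
    rcases eq_or_ne (f y) 0 with hfy | hfy
    · simpa [hfy] using sq_pos_of_ne_zero (mul_ne_zero hfx hy.ne')
    · exact add_pos_of_nonneg_of_pos (sq_nonneg _)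
        (mul_pos (sq_pos_of_ne_zero hfy) (sub_pos.mpr hlt))
  exact (mul_nonpos_of_nonneg_of_nonpos hy.le hu).not_gt (key ▸ hpos)

section InnerProductSpace

variable {E : Type*} [NormedAddCommGroup E] [InnerProductSpace ℝ E]

theorem LinearMap.IsSymmetric.inner_apply_self_nonpos [FiniteDimensional ℝ E]
    {T : E →ₗ[ℝ] E} (hT : T.IsSymmetric) {u : E}
    (h : ∀ μ v, HasEigenvector T μ v → μ ≤ 0 ∨ ⟪v, u⟫ = 0) : ⟪u, T u⟫ ≤ 0 := by
  rw [← (hT.eigenvectorBasis rfl).sum_inner_mul_inner]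
  refine Finset.sum_nonpos fun i _ ↦ ?_
  rw [← hT, hT.apply_eigenvectorBasis, real_inner_smul_left, real_inner_comm]
  rcases h _ _ (hT.hasEigenvector_eigenvectorBasis rfl i) with hμ | h0
  · rw [mul_left_comm]
    exact mul_nonpos_of_nonpos_of_nonneg hμ (mul_self_nonneg _)
  · simp [h0]

theorem Module.End.HasEigenvector.nonpos_or_one_le {A : E →ₗ[ℝ] E} {μ : ℝ} {v : E}
    (hv : HasEigenvector A μ v) (h : ⟪v, A v⟫ ≤ ⟪A v, A v⟫) : μ ≤ 0 ∨ 1 ≤ μ := by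
  have hvv : 0 < ⟪v, v⟫ := real_inner_self_pos.mpr hv.2
  rw [hv.apply_eq_smul, real_inner_smul_left, real_inner_smul_right] at h
  by_contra! hμ
  nlinarith [mul_pos (mul_pos hμ.1 (sub_pos.mpr hμ.2)) hvv]

end InnerProductSpace

theorem stmt13 {E : Type*} [NormedAddCommGroup E] [InnerProductSpace ℝ E]
    [FiniteDimensional ℝ E] (A : E →ₗ[ℝ] E)
    (hsa : ∀ x y : E, ⟪A x, y⟫ = ⟪x, A y⟫)
    (w : E) (hw : w ≠ 0) (hAw : A w = w)
    (hsimple : Module.finrank ℝ (Module.End.eigenspace A 1) = 1)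
    (hmax : ∀ μ : ℝ, Module.End.HasEigenvalue A μ → μ ≠ 1 → μ < 1)
    (hB : ∀ x : E, ⟪A x, A x⟫ ≥ ⟪x, A x⟫) :
    ∀ x y : E, 0 ≤ ⟪y, A y⟫ → ⟪x, A y⟫ ^ 2 ≥ ⟪x, A x⟫ * ⟪y, A y⟫ := by
  have hspan : eigenspace A 1 = ℝ ∙ w :=
    eq_span_singleton_of_mem_of_finrank_eq_one hsimple
      (mem_eigenspace_iff.mpr (by rw [hAw, one_smul])) hw
  have hneg (u : E) (hu : ⟪w, u⟫ = 0) : ⟪u, A u⟫ ≤ 0 := by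
    refine LinearMap.IsSymmetric.inner_apply_self_nonpos hsa fun μ v hv ↦ ?_
    by_cases hμ : μ = 1
    · subst hμ
      have hvw : v ∈ ℝ ∙ w := hspan ▸ hv.1
      obtain ⟨c, rfl⟩ := Submodule.mem_span_singleton.mp hvw
      exact .inr (by rw [real_inner_smul_left, hu, mul_zero])
    · exact .inl ((hv.nonpos_or_one_le (hB v)).resolve_right
        (hmax μ (hasEigenvalue_of_hasEigenvector hv) hμ).not_ge)
  have hsymm : LinearMap.BilinForm.IsSymm ((innerₗ E).compl₂ A) := ⟨fun x y ↦ by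
    simp only [LinearMap.compl₂_apply, innerₗ_apply_apply]
    rw [← hsa, real_inner_comm]⟩
  intro x y hy
  simpa using hsymm.mul_self_le_sq_of_nonpos_on_ker (innerₗ E w) (by simpa using hneg) x y
    (by simpa using hy)
end
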